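/- arXiv:2605.21822 — 3 statements merged into one kernel-verified Lean document; each statement's English description precedes it below -/
import Mathlib

section
/- Under the setting of the previous statement (per-step reward decomposed into a bounded user component and a safety penalty −K on unsafe state-action pairs), if K > 2·L·M, then every pair consisting of a safe trajectory and an unsafe trajectory is consistent: all contexts z agree that the safe trajectory has strictly higher utility. Consequently the Borda count (computed over any finite trajectory set containing both, with any fully supported context distribution) of the safe trajectory strictly exceeds that of the unsafe trajectory. -/
open Finset

open Classical in
noncomputable def rShare {S A : Type*} (Xunsafe : Set (S × A)) (K : ℝ) (sa : S × A) : ℝ :=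
  if sa ∈ Xunsafe then -K else 0

noncomputable def util {S A Z : Type*} (Xunsafe : Set (S × A)) (K : ℝ)
    (rUser : S → A → Z → ℝ) {L : ℕ} (τ : Fin L → S × A) (z : Z) : ℝ :=
  ∑ t : Fin L, (rUser (τ t).1 (τ t).2 z + rShare Xunsafe K (τ t))

noncomputable def Ocmp {T Z : Type*} (u : T → Z → ℝ) (a b : T) (z : Z) : ℝ :=
  if u a z > u b z then 1 else if u a z = u b z then 1/2 else 0

noncomputable def BordaCount {T Z : Type*} [Fintype T] [Fintype Z]
    (u : T → Z → ℝ) (p : Z → ℝ) (a : T) : ℝ :=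
  (1 / (Fintype.card T : ℝ)) * ∑ b : T, ∑ z : Z, p z * Ocmp u a b z

theorem stmt_2 {S A Z T : Type*} [Fintype T] [Fintype Z] [Nonempty T] [Nonempty Z]
    (Xunsafe : Set (S × A)) (K M : ℝ)
    (rUser : S → A → Z → ℝ) (L : ℕ) (hL : 1 ≤ L)
    (hM : ∀ s a z, |rUser s a z| ≤ M)
    (hK0 : 0 < K) (hK : K > 2 * L * M)
    (traj : T → (Fin L → S × A)) (i j : T)
    (hsafe : ∀ t, traj i t ∉ Xunsafe)
    (hunsafe : ∃ t, traj j t ∈ Xunsafe)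
    (p : Z → ℝ) (hp_pos : ∀ z, 0 < p z) (hp_sum : ∑ z : Z, p z = 1) :
    (∀ z : Z, util Xunsafe K rUser (traj i) z > util Xunsafe K rUser (traj j) z) ∧
      BordaCount (fun t z => util Xunsafe K rUser (traj t) z) p i >
        BordaCount (fun t z => util Xunsafe K rUser (traj t) z) p j := by
  classical
  have hmain : ∀ z : Z, util Xunsafe K rUser (traj i) z > util Xunsafe K rUser (traj j) z := by
    intro z
    have hlow : (-(L : ℝ)) * M ≤ util Xunsafe K rUser (traj i) z := by
      unfold util
      have : ∑ t : Fin L, (-M) ≤ ∑ t : Fin L,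
          (rUser ((traj i) t).1 ((traj i) t).2 z + rShare Xunsafe K ((traj i) t)) := by
        apply Finset.sum_le_sum
        intro t _
        have h1 := abs_le.mp (hM ((traj i) t).1 ((traj i) t).2 z)
        have h2 : rShare Xunsafe K ((traj i) t) = 0 := by
          unfold rShare; rw [if_neg (hsafe t)]
        linarith [h1.1]
      simpa [Finset.sum_const, Finset.card_univ, neg_mul] using this
    obtain ⟨t0, ht0⟩ := hunsafe
    have hhigh : util Xunsafe K rUser (traj j) z ≤ (L : ℝ) * M - K := by
      unfold util
      have hbound : ∀ t : Fin L,
          rUser ((traj j) t).1 ((traj j) t).2 z + rShare Xunsafe K ((traj j) t) ≤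
            M + rShare Xunsafe K ((traj j) t) := by
        intro t
        have := abs_le.mp (hM ((traj j) t).1 ((traj j) t).2 z)
        linarith [this.2]
      calc ∑ t : Fin L, (rUser ((traj j) t).1 ((traj j) t).2 z + rShare Xunsafe K ((traj j) t))
          ≤ ∑ t : Fin L, (M + rShare Xunsafe K ((traj j) t)) :=
            Finset.sum_le_sum fun t _ => hbound t
        _ = (L : ℝ) * M + ∑ t : Fin L, rShare Xunsafe K ((traj j) t) := by
            rw [Finset.sum_add_distrib]; simp [Finset.card_univ, mul_comm]
        _ ≤ (L : ℝ) * M - K := by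
            have hle : ∑ t : Fin L, rShare Xunsafe K ((traj j) t) ≤ -K := by
              have h0 : rShare Xunsafe K ((traj j) t0) = -K := by
                unfold rShare; rw [if_pos ht0]
              have heq : ∑ t : Fin L, rShare Xunsafe K ((traj j) t) =
                  rShare Xunsafe K ((traj j) t0) +
                    ∑ t ∈ Finset.univ.erase t0, rShare Xunsafe K ((traj j) t) :=
                (Finset.add_sum_erase _ _ (Finset.mem_univ t0)).symm
              have hrest : ∑ t ∈ Finset.univ.erase t0, rShare Xunsafe K ((traj j) t) ≤ 0 := by
                apply Finset.sum_nonpos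
                intro t _
                unfold rShare
                split <;> linarith
              rw [heq, h0]; linarith
            linarith
    have hM0 : 0 ≤ M := le_trans (abs_nonneg _)
      (hM ((traj j) t0).1 ((traj j) t0).2 (Classical.arbitrary Z))
    have : (L : ℝ) * M - K < -(L : ℝ) * M := by nlinarith
    linarith
  refine ⟨hmain, ?_⟩
  unfold BordaCount
  have hcard : 0 < (1 / (Fintype.card T : ℝ)) := by
    have : (0 : ℝ) < Fintype.card T := by exact_mod_cast Fintype.card_pos
    positivity
  apply mul_lt_mul_of_pos_left _ hcard
  set u : T → Z → ℝ := fun t z => util Xunsafe K rUser (traj t) z with hu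
  have hOle : ∀ b z, Ocmp u j b z ≤ Ocmp u i b z := by
    intro b z
    unfold Ocmp
    have hij : u j z < u i z := hmain z
    by_cases h1 : u j z > u b z
    · rw [if_pos h1, if_pos (lt_trans h1 hij)]
    · by_cases h2 : u j z = u b z
      · rw [if_neg h1, if_pos h2, if_pos (h2 ▸ hij)]; norm_num
      · rw [if_neg h1, if_neg h2]
        split <;> [norm_num; skip]
        split <;> norm_num
  apply Finset.sum_lt_sum (f := fun b => ∑ z : Z, p z * Ocmp u j b z)
  · intro b _
    exact Finset.sum_le_sum fun z _ =>
      mul_le_mul_of_nonneg_left (hOle b z) (le_of_lt (hp_pos z))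
  · refine ⟨j, Finset.mem_univ j, ?_⟩
    apply Finset.sum_lt_sum_of_nonempty ⟨Classical.arbitrary Z, Finset.mem_univ _⟩
    intro z _
    apply mul_lt_mul_of_pos_left _ (hp_pos z)
    unfold Ocmp
    have hij : u j z < u i z := hmain z
    rw [if_neg (lt_irrefl _), if_pos rfl, if_pos hij]
    norm_num
end

section
/- Let T be a finite trajectory set, Z = {z_1,…,z_m} a finite context set, u : T × Z → ℝ, and for a pair (τ¹,τ²) and context z define N(τ¹,τ²,z) as the number of trajectories τ ∈ T with utility strictly between u(τ¹,z) and u(τ²,z). Assume u(τ¹,z_k) > u(τ²,z_k) for a fixed context z_k. Then, with the comparison function O as before, the single-context Borda sum satisfies S_k := Σ_{τ∈T} [O(τ¹,τ,z_k) − O(τ²,τ,z_k)] ≥ 1 + N(τ¹,τ²,z_k). -/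
open Finset
open scoped Classical

/-- Number of trajectories whose utility lies strictly between those of τ¹ and τ². -/
noncomputable def Nbetween {T Z : Type*} [Fintype T] (u : T → Z → ℝ)
    (τ1 τ2 : T) (z : Z) : ℕ :=
  (Finset.univ.filter (fun τ : T =>
    (u τ1 z > u τ z ∧ u τ z > u τ2 z) ∨ (u τ1 z < u τ z ∧ u τ z < u τ2 z))).card

theorem stmt_3 {T Z : Type*} [Fintype T] [Nonempty T]
    (u : T → Z → ℝ) (τ1 τ2 : T) (zk : Z)
    (h : u τ1 zk > u τ2 zk) :
    ∑ τ : T, (Ocmp u τ1 τ zk - Ocmp u τ2 τ zk) ≥ 1 + (Nbetween u τ1 τ2 zk : ℝ) := by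
  have hne : τ1 ≠ τ2 := by
    intro he; rw [he] at h; exact lt_irrefl _ h
  have hpt : ∀ τ : T,
      (if (u τ1 zk > u τ zk ∧ u τ zk > u τ2 zk) ∨ (u τ1 zk < u τ zk ∧ u τ zk < u τ2 zk)
        then (1:ℝ) else 0)
      + (if τ = τ1 then (1:ℝ)/2 else 0) + (if τ = τ2 then (1:ℝ)/2 else 0)
      ≤ Ocmp u τ1 τ zk - Ocmp u τ2 τ zk := by
    intro τ
    unfold Ocmp
    split_ifs <;> simp_all <;> first | linarith | (rcases ‹_ ∨ _› with h9 | h9 <;> linarith)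
  have hsum := Finset.sum_le_sum (fun τ (_ : τ ∈ Finset.univ) => hpt τ)
  rw [Finset.sum_add_distrib, Finset.sum_add_distrib, Finset.sum_boole,
    Finset.sum_ite_eq' Finset.univ τ1 (fun _ => (1:ℝ)/2),
    Finset.sum_ite_eq' Finset.univ τ2 (fun _ => (1:ℝ)/2)] at hsum
  simp only [Finset.mem_univ, if_true] at hsum
  unfold Nbetween
  linarith
end

section
/- Let T be a finite set, f, g : T → ℝ with |f(τ) − g(τ)| ≤ ε for all τ, and α > 0. Define Gibbs distributions p(τ) = exp(f(τ)/α)/Z_p and q(τ) = exp(g(τ)/α)/Z_q with the corresponding normalizers. Then the Kullback–Leibler divergence satisfies KL(p‖q) ≤ ε²/(2α²). -/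
/-!
Write `Δ = (g - f) / α`. Since `q ∝ p · exp Δ`, the divergence is
`KL(p‖q) = -E_p[Δ] + log E_p[exp Δ]`, and `Δ` takes values in `[-ε/α, ε/α]`, so Hoeffding's lemma
bounds it by `(2ε/α)² / 8 = ε² / (2α²)`.
-/

open Finset

/-- Gibbs distribution with potential f and temperature α. -/
noncomputable def gibbs {T : Type*} [Fintype T] (f : T → ℝ) (α : ℝ) (τ : T) : ℝ :=
  Real.exp (f τ / α) / ∑ τ' : T, Real.exp (f τ' / α)

open MeasureTheory ProbabilityTheory Real

section WeightedDirac

variable {ι : Type*} [Fintype ι] [MeasurableSpace ι] [MeasurableSingletonClass ι]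

lemma integral_sum_ofReal_smul_dirac {w : ι → ℝ} (hw : ∀ i, 0 ≤ w i) (h : ι → ℝ) :
    ∫ i, h i ∂(∑ j, ENNReal.ofReal (w j) • Measure.dirac j) = ∑ i, w i * h i := by
  have (j : ι) : IsFiniteMeasure (ENNReal.ofReal (w j) • Measure.dirac j) := by
    constructor; simp
  rw [integral_finsetSum_measure fun j _ => .of_finite]
  simp [integral_smul_measure, integral_dirac, ENNReal.toReal_ofReal (hw _)]

omit [MeasurableSingletonClass ι] in
lemma isProbabilityMeasure_sum_ofReal_smul_dirac {w : ι → ℝ} (hw : ∀ i, 0 ≤ w i)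
    (hw1 : ∑ i, w i = 1) :
    IsProbabilityMeasure (∑ j, ENNReal.ofReal (w j) • Measure.dirac j) := by
  constructor
  simp [← ENNReal.ofReal_sum_of_nonneg fun i _ => hw i, hw1]

end WeightedDirac

theorem log_sum_mul_exp_le {ι : Type*} [Fintype ι] {w X : ι → ℝ} (hw : ∀ i, 0 ≤ w i)
    (hw1 : ∑ i, w i = 1) {a b : ℝ} (hX : ∀ i, X i ∈ Set.Icc a b) :
    log (∑ i, w i * exp (X i)) ≤ ∑ i, w i * X i + (b - a) ^ 2 / 8 := by
  let _ : MeasurableSpace ι := ⊤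
  set μ : Measure ι := ∑ j, ENNReal.ofReal (w j) • Measure.dirac j
  have := isProbabilityMeasure_sum_ofReal_smul_dirac hw hw1
  have hint (h : ι → ℝ) : ∫ i, h i ∂μ = ∑ i, w i * h i := integral_sum_ofReal_smul_dirac hw h
  have hoeffding := (hasSubgaussianMGF_of_mem_Icc (μ := μ) (X := X) .of_discrete
    (.of_forall hX)).mgf_le 1
  have hpos : 0 < ∑ i, w i * exp (X i) := hint (exp ∘ X) ▸ integral_exp_pos .of_finite
  have hc : (((‖b - a‖₊ / 2) ^ 2 : NNReal) : ℝ) = ((b - a) / 2) ^ 2 := by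
    push_cast; rw [Real.norm_eq_abs, div_pow, div_pow, sq_abs]
  simp only [mgf, hint, one_mul, exp_sub, ← mul_div_assoc, ← sum_div, hc] at hoeffding
  rw [div_le_iff₀ (exp_pos _), ← exp_add] at hoeffding
  rw [log_le_iff_le_exp hpos]
  exact hoeffding.trans_eq (congrArg exp (by ring))

section Gibbs

variable {T : Type*} [Fintype T]

lemma sum_exp_div_pos [Nonempty T] (f : T → ℝ) (α : ℝ) : 0 < ∑ τ, exp (f τ / α) :=
  sum_pos (fun _ _ => exp_pos _) univ_nonempty

lemma gibbs_pos [Nonempty T] (f : T → ℝ) (α : ℝ) (τ : T) : 0 < gibbs f α τ :=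
  div_pos (exp_pos _) (sum_exp_div_pos f α)

lemma sum_gibbs [Nonempty T] (f : T → ℝ) (α : ℝ) : ∑ τ, gibbs f α τ = 1 := by
  simp only [gibbs, ← sum_div, div_self (sum_exp_div_pos f α).ne']

lemma log_gibbs [Nonempty T] (f : T → ℝ) (α : ℝ) (τ : T) :
    log (gibbs f α τ) = f τ / α - log (∑ τ', exp (f τ' / α)) := by
  rw [gibbs, log_div (exp_ne_zero _) (sum_exp_div_pos f α).ne', log_exp]

lemma sum_gibbs_mul_exp_sub_div (f g : T → ℝ) (α : ℝ) :
    ∑ τ, gibbs f α τ * exp ((g τ - f τ) / α) =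
      (∑ τ, exp (g τ / α)) / ∑ τ, exp (f τ / α) := by
  rw [sum_div]
  refine sum_congr rfl fun τ _ => ?_
  rw [gibbs, div_mul_eq_mul_div, ← exp_add, sub_div, add_sub_cancel]

theorem sum_gibbs_mul_log_div_gibbs [Nonempty T] (f g : T → ℝ) (α : ℝ) :
    ∑ τ, gibbs f α τ * log (gibbs f α τ / gibbs g α τ) =
      -∑ τ, gibbs f α τ * ((g τ - f τ) / α) +
        log (∑ τ, gibbs f α τ * exp ((g τ - f τ) / α)) := by
  have hlog (τ : T) : log (gibbs f α τ / gibbs g α τ) =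
      -((g τ - f τ) / α) + log ((∑ τ, exp (g τ / α)) / ∑ τ, exp (f τ / α)) := by
    rw [log_div (gibbs_pos f α τ).ne' (gibbs_pos g α τ).ne', log_gibbs, log_gibbs,
      log_div (sum_exp_div_pos g α).ne' (sum_exp_div_pos f α).ne']
    ring
  simp only [hlog, mul_add, sum_add_distrib, ← sum_mul, sum_gibbs, one_mul, mul_neg,
    sum_neg_distrib, sum_gibbs_mul_exp_sub_div]

end Gibbs

theorem stmt_8 {T : Type*} [Fintype T] [Nonempty T]
    (f g : T → ℝ) (ε α : ℝ) (hα : 0 < α)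
    (hbound : ∀ τ, |f τ - g τ| ≤ ε) :
    ∑ τ : T, gibbs f α τ * Real.log (gibbs f α τ / gibbs g α τ) ≤
      ε ^ 2 / (2 * α ^ 2) := by
  have hX (τ : T) : (g τ - f τ) / α ∈ Set.Icc (-(ε / α)) (ε / α) := by
    rw [Set.mem_Icc, ← abs_le, abs_div, abs_of_pos hα, abs_sub_comm]
    exact div_le_div_of_nonneg_right (hbound τ) hα.le
  have hoeffding := log_sum_mul_exp_le (fun τ => (gibbs_pos f α τ).le) (sum_gibbs f α) hX
  have hc : (ε / α - -(ε / α)) ^ 2 / 8 = ε ^ 2 / (2 * α ^ 2) := by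
    field_simp
    ring
  rw [sum_gibbs_mul_log_div_gibbs]
  linarith
end
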